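/- arXiv:2011.13712 — 2 statements merged into one kernel-verified Lean document; each statement's English description precedes it below -/
import Mathlib

section
/- Let α ∈ [0,1), E > 0 and ν := (1+α)/2. Then the function u(x) := √x · K_ν(x√E) is square-integrable on (0,∞); equivalently, the function x ↦ x·(K_ν(x√E))² is integrable on (0,∞). -/
/-!
Splitting `x cosh t ≥ x/2 + x eᵗ/4` and using `e^{-s} ≤ s^{-a}` (`0 ≤ a ≤ 1`) on the second
half gives, for `|ν| < a ≤ 1`, the uniform bound `K_ν(x) ≤ (4/x)^a e^{-x/2} / (a - |ν|)`.
With `a := (1 + |ν|)/2 < 1` this yields `x K_ν(cx)² ≤ C x^{1-2a} e^{-cx}`, a Gamma-type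
integrand that is integrable on `(0, ∞)` because `1 - 2a > -1`.
-/

open Filter Topology MeasureTheory

/-- The modified Bessel function of the second kind `K_ν(x)`, for `x > 0`, defined by
the integral representation `K_ν(x) = ∫₀^∞ exp(−x cosh t) cosh(ν t) dt`. -/
noncomputable def besselK (ν x : ℝ) : ℝ :=
  ∫ t in Set.Ioi (0 : ℝ), Real.exp (-x * Real.cosh t) * Real.cosh (ν * t)

open Real Set

lemma Real.cosh_le_exp_abs (y : ℝ) : cosh y ≤ exp |y| := by
  rw [cosh_eq]
  have h₁ : exp y ≤ exp |y| := exp_le_exp.2 (le_abs_self y)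
  have h₂ : exp (-y) ≤ exp |y| := exp_le_exp.2 (neg_le_abs y)
  linarith

lemma Real.exp_neg_le_rpow_neg {s a : ℝ} (hs : 0 < s) (ha₀ : 0 ≤ a) (ha₁ : a ≤ 1) :
    exp (-s) ≤ s ^ (-a) := by
  have hpow : s ^ a ≤ exp s := by
    rcases le_total s 1 with h | h
    · exact (rpow_le_one hs.le h ha₀).trans (one_le_exp hs.le)
    · calc s ^ a ≤ s ^ (1 : ℝ) := rpow_le_rpow_of_exponent_le h ha₁
        _ = s := rpow_one s
        _ ≤ exp s := by linarith [add_one_le_exp s]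
  rw [exp_neg, rpow_neg hs.le]
  exact inv_anti₀ (rpow_pos_of_pos hs a) hpow

lemma besselK_integrand_nonneg (ν x t : ℝ) : 0 ≤ exp (-x * cosh t) * cosh (ν * t) := by
  positivity

lemma besselK_integrand_le {ν a x t : ℝ} (hx : 0 < x) (ht : 0 ≤ t) (ha₀ : 0 ≤ a) (ha₁ : a ≤ 1) :
    exp (-x * cosh t) * cosh (ν * t) ≤ (4 / x) ^ a * exp (-x / 2) * exp (-(a - |ν|) * t) := by
  have hsplit : x / 2 + x * exp t / 4 ≤ x * cosh t := by
    nlinarith [one_le_cosh t, cosh_eq t, exp_pos (-t)]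
  have hrpow : (x * exp t / 4) ^ (-a) = (4 / x) ^ a * exp (-(a * t)) := by
    rw [show x * exp t / 4 = x / 4 * exp t by ring, mul_rpow (by positivity) (exp_pos t).le,
      ← exp_mul, rpow_neg (by positivity), ← inv_rpow (by positivity), inv_div]
    ring_nf
  have hexp : exp (-x * cosh t) ≤ exp (-x / 2) * (x * exp t / 4) ^ (-a) := by
    calc exp (-x * cosh t) ≤ exp (-x / 2) * exp (-(x * exp t / 4)) := by
          rw [← exp_add]; exact exp_le_exp.2 (by linarith)
      _ ≤ exp (-x / 2) * (x * exp t / 4) ^ (-a) :=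
          mul_le_mul_of_nonneg_left (exp_neg_le_rpow_neg (by positivity) ha₀ ha₁) (exp_pos _).le
  have hcosh : cosh (ν * t) ≤ exp (|ν| * t) := by
    simpa [abs_mul, abs_of_nonneg ht] using cosh_le_exp_abs (ν * t)
  calc exp (-x * cosh t) * cosh (ν * t)
      ≤ exp (-x / 2) * (x * exp t / 4) ^ (-a) * exp (|ν| * t) :=
        mul_le_mul hexp hcosh (cosh_pos _).le (by positivity)
    _ = (4 / x) ^ a * exp (-x / 2) * exp (-(a - |ν|) * t) := by
        rw [hrpow, mul_assoc, mul_assoc, mul_assoc, ← exp_add]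
        ring_nf

lemma besselK_nonneg (ν x : ℝ) : 0 ≤ besselK ν x :=
  setIntegral_nonneg measurableSet_Ioi fun t _ => besselK_integrand_nonneg ν x t

lemma measurable_besselK (ν : ℝ) : Measurable (besselK ν) :=
  (StronglyMeasurable.integral_prod_right'
    (f := fun p : ℝ × ℝ => exp (-p.1 * cosh p.2) * cosh (ν * p.2))
    (Continuous.stronglyMeasurable (by fun_prop))).measurable

lemma besselK_le_rpow_mul_exp {ν a x : ℝ} (hx : 0 < x) (hνa : |ν| < a) (ha₁ : a ≤ 1) :
    besselK ν x ≤ (4 / x) ^ a * exp (-x / 2) / (a - |ν|) := by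
  have hb : 0 < a - |ν| := sub_pos.2 hνa
  have hdom : IntegrableOn (fun t => (4 / x) ^ a * exp (-x / 2) * exp (-(a - |ν|) * t))
      (Ioi 0) :=
    (exp_neg_integrableOn_Ioi 0 hb).const_mul _
  calc besselK ν x
      ≤ ∫ t in Ioi (0 : ℝ), (4 / x) ^ a * exp (-x / 2) * exp (-(a - |ν|) * t) :=
        integral_mono_of_nonneg (ae_of_all _ (besselK_integrand_nonneg ν x)) hdom
          ((ae_restrict_mem measurableSet_Ioi).mono fun t ht =>
            besselK_integrand_le hx (le_of_lt ht) ((abs_nonneg ν).trans hνa.le) ha₁)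
    _ = (4 / x) ^ a * exp (-x / 2) / (a - |ν|) := by
        rw [integral_const_mul, integral_exp_mul_Ioi (neg_lt_zero.2 hb)]
        field_simp
        simp

lemma mul_besselK_mul_sq_le {ν a c x : ℝ} (hc : 0 < c) (hx : 0 < x) (hνa : |ν| < a)
    (ha₁ : a ≤ 1) :
    x * besselK ν (x * c) ^ 2 ≤
      ((4 / c) ^ a / (a - |ν|)) ^ 2 * (x ^ (1 - 2 * a) * exp (-c * x)) := by
  have hK := besselK_le_rpow_mul_exp (mul_pos hx hc) hνa ha₁
  have hfactor : (4 / (x * c)) ^ a = (4 / c) ^ a * x ^ (-a) := by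
    rw [show 4 / (x * c) = 4 / c * x⁻¹ by field_simp, mul_rpow (by positivity) (by positivity),
      inv_rpow hx.le, rpow_neg hx.le]
  calc x * besselK ν (x * c) ^ 2
      ≤ x * ((4 / (x * c)) ^ a * exp (-(x * c) / 2) / (a - |ν|)) ^ 2 :=
        mul_le_mul_of_nonneg_left (pow_le_pow_left₀ (besselK_nonneg _ _) hK 2) hx.le
    _ = ((4 / c) ^ a / (a - |ν|)) ^ 2 * (x ^ (1 - 2 * a) * exp (-c * x)) := by
        have hpow : x * (x ^ (-a)) ^ 2 = x ^ (1 - 2 * a) := by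
          rw [← rpow_natCast, ← rpow_mul hx.le, sub_eq_add_neg, rpow_add hx, rpow_one]
          norm_num [mul_comm]
        have hexp : exp (-(x * c) / 2) ^ 2 = exp (-c * x) := by
          rw [sq, ← exp_add]; ring_nf
        rw [hfactor, ← hpow, ← hexp]
        ring

theorem integrableOn_mul_besselK_mul_sq {ν c : ℝ} (hν : |ν| < 1) (hc : 0 < c) :
    IntegrableOn (fun x => x * besselK ν (x * c) ^ 2) (Ioi 0) := by
  set a := (1 + |ν|) / 2 with ha
  have hνa : |ν| < a := by linarith
  have ha₁ : a < 1 := by linarith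
  have hdom : IntegrableOn (fun x => ((4 / c) ^ a / (a - |ν|)) ^ 2 *
      (x ^ (1 - 2 * a) * exp (-c * x))) (Ioi 0) := by
    have h := integrableOn_rpow_mul_exp_neg_mul_rpow (s := 1 - 2 * a) (p := 1) (by linarith)
      one_pos hc
    simp only [rpow_one] at h
    exact h.const_mul _
  refine hdom.mono' ?_ ((ae_restrict_mem measurableSet_Ioi).mono fun x hx => ?_)
  · exact (measurable_id.mul (((measurable_besselK ν).comp
      (measurable_id.mul_const c)).pow_const 2)).aestronglyMeasurable
  · rw [norm_of_nonneg (mul_nonneg (le_of_lt hx) (sq_nonneg _))]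
    exact mul_besselK_mul_sq_le hc hx hνa ha₁.le

/-- the generalised eigenfunction `u(x) = √x K_{(1+α)/2}(x√E)` is
square-integrable on `(0,∞)`; equivalently `x ↦ x (K_{(1+α)/2}(x√E))²` is
integrable on `(0,∞)`. -/
theorem besselK_eigenfunction_square_integrable (α E : ℝ)
    (hα : α ∈ Set.Ico (0 : ℝ) 1) (hE : 0 < E) :
    IntegrableOn
      (fun x : ℝ => (Real.sqrt x * besselK ((1 + α) / 2) (x * Real.sqrt E)) ^ 2)
      (Set.Ioi 0) ∧
    IntegrableOn
      (fun x : ℝ => x * besselK ((1 + α) / 2) (x * Real.sqrt E) ^ 2)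
      (Set.Ioi 0) := by
  have hν : |(1 + α) / 2| < 1 := abs_lt.2 ⟨by linarith [hα.1], by linarith [hα.2]⟩
  have h := integrableOn_mul_besselK_mul_sq hν (sqrt_pos.2 hE)
  refine ⟨h.congr_fun (fun x hx => ?_) measurableSet_Ioi, h⟩
  rw [mul_pow, sq_sqrt (le_of_lt hx)]
end

section
/- Let α ∈ [0,1), let γ < 0, set ν := (1+α)/2 and E := ( 2^{1+α}·Γ(ν)·γ / Γ(−ν) )^{2/(1+α)}. Then E > 0, and the function u(x) := √x · K_ν(x√E) has boundary values u₀ := lim_{x→0⁺} x^{α/2}·u(x) and u₁ := lim_{x→0⁺} x^{−(1+α/2)}·(u(x) − u₀·x^{−α/2}) which exist, with u₀ ≠ 0 and u₁ = γ·u₀; that is, u satisfies the boundary condition of self-adjointness g₁ = γ·g₀ characterising the extension A^{[γ]}_{α,R}(0), so −E is its ground-state energy. -/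
open Filter Topology MeasureTheory

/-!
Substituting `s = (z/2) eᵗ` in `∫_ℝ e^{-z cosh t} e^{νt} dt = 2 K_ν(z)` gives
`K_ν(z) = ½ (z/2)^{-ν} F_ν(z²/4)` with `F_ν(c) = ∫₀^∞ e^{-s-c/s} s^{ν-1} ds`, hence
`√x K_ν(x√E) = ½ (√E/2)^{-ν} x^{-α/2} F_ν(E x²/4)`. The substitution `s = c/t` gives
`F_ν(c) - Γ(ν) = c^ν ∫₀^∞ e^{-c/t} (e^{-t} - 1) t^{-ν-1} dt`, and by dominated convergence the
last integral tends to `∫₀^∞ (e^{-t} - 1) t^{-ν-1} dt = Γ(-ν)` as `c → 0⁺`; for `0 < ν < 1` this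
is the analytic continuation of Euler's integral, obtained by one integration by parts.
So `u₀ = ½ (√E/2)^{-ν} Γ(ν)` and `u₁ = ½ (√E/2)^{ν} Γ(-ν)`, and `E` is chosen exactly so that
`(E/4)^ν Γ(-ν) = γ Γ(ν)`.
-/

open Real Set

lemma exp_neg_le_factorial_div_pow {x : ℝ} (hx : 0 < x) (n : ℕ) :
    exp (-x) ≤ n.factorial / x ^ n := by
  rw [exp_neg, ← inv_div]
  exact inv_anti₀ (by positivity) (pow_div_factorial_le_exp _ hx.le n)

lemma integrableOn_exp_neg_sub_div_mul_rpow {c : ℝ} (hc : 0 < c) (p : ℝ) :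
    IntegrableOn (fun s => exp (-s - c / s) * s ^ p) (Ioi 0) := by
  -- `e^{-c/s} ≤ n! (s/c)ⁿ` tames `s ^ p` at `0`, and `e^{-s}` takes care of `∞`.
  obtain ⟨n, hn⟩ := exists_nat_gt (-p)
  have hΓ := GammaIntegral_convergent (s := p + n + 1) (by linarith)
  rw [add_sub_cancel_right] at hΓ
  have hdom : IntegrableOn (fun s => n.factorial / c ^ n * (exp (-s) * s ^ (p + n))) (Ioi 0) :=
    hΓ.const_mul _
  refine hdom.mono' (by fun_prop) ?_
  filter_upwards [ae_restrict_mem measurableSet_Ioi] with s (hs : 0 < s)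
  rw [norm_of_nonneg (by positivity), sub_eq_add_neg, exp_add, rpow_add hs, rpow_natCast]
  calc exp (-s) * exp (-(c / s)) * s ^ p
      ≤ exp (-s) * (n.factorial / (c / s) ^ n) * s ^ p := by
        gcongr; exact exp_neg_le_factorial_div_pow (by positivity) n
    _ = n.factorial / c ^ n * (exp (-s) * (s ^ p * s ^ n)) := by
        rw [div_pow]; field_simp

lemma tendsto_rpow_nhdsGT_zero {p : ℝ} (hp : 0 < p) :
    Tendsto (fun x : ℝ => x ^ p) (𝓝[>] 0) (𝓝 0) := by
  simpa [zero_rpow hp.ne'] using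
    (continuousAt_rpow_const 0 p (Or.inr hp.le)).tendsto.mono_left nhdsWithin_le_nhds

lemma abs_exp_neg_sub_one_le {t : ℝ} (ht : 0 ≤ t) : |exp (-t) - 1| ≤ t := by
  rw [abs_sub_comm, abs_of_nonneg (by simpa using ht)]
  linarith [add_one_le_exp (-t)]

lemma integrableOn_exp_neg_sub_one_mul_rpow {s : ℝ} (hs : s ∈ Ioo (-1) 0) :
    IntegrableOn (fun t => (exp (-t) - 1) * t ^ (s - 1)) (Ioi 0) := by
  obtain ⟨hs₁, hs₀⟩ := hs
  have hmeas : AEStronglyMeasurable (fun t : ℝ => (exp (-t) - 1) * t ^ (s - 1)) := by fun_prop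
  rw [← Ioc_union_Ioi_eq_Ioi zero_le_one, integrableOn_union]
  constructor
  · refine (intervalIntegral.intervalIntegrable_rpow' hs₁).1.mono' hmeas.restrict ?_
    filter_upwards [ae_restrict_mem measurableSet_Ioc] with t ht
    obtain ⟨ht, -⟩ := ht
    calc ‖(exp (-t) - 1) * t ^ (s - 1)‖ ≤ t * t ^ (s - 1) := by
          rw [norm_mul, norm_of_nonneg (rpow_nonneg ht.le _)]
          gcongr; exact abs_exp_neg_sub_one_le ht.le
      _ = t ^ s := by rw [← rpow_one_add' ht.le (by linarith)]; ring_nf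
  · refine (integrableOn_Ioi_rpow_of_lt (a := s - 1) (by linarith) one_pos).mono'
      hmeas.restrict ?_
    filter_upwards [ae_restrict_mem measurableSet_Ioi] with t (ht : 1 < t)
    have h1 : |exp (-t) - 1| ≤ 1 := by
      rw [abs_le]
      constructor <;> linarith [exp_pos (-t), exp_le_one_iff.2 (by linarith : -t ≤ 0)]
    calc ‖(exp (-t) - 1) * t ^ (s - 1)‖ ≤ 1 * t ^ (s - 1) := by
          rw [norm_mul, norm_of_nonneg (rpow_nonneg (by linarith) _)]
          gcongr; exact h1
      _ = t ^ (s - 1) := one_mul _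

lemma Gamma_eq_integral_exp_neg_sub_one_mul_rpow {s : ℝ} (hs : s ∈ Ioo (-1) 0) :
    Gamma s = ∫ t in Ioi 0, (exp (-t) - 1) * t ^ (s - 1) := by
  obtain ⟨hs₁, hs₀⟩ := hs
  have hΓ := GammaIntegral_convergent (s := s + 1) (by linarith)
  rw [add_sub_cancel_right] at hΓ
  have hu : ∀ t ∈ Ioi (0 : ℝ), HasDerivAt (fun t => exp (-t) - 1) (-exp (-t)) t := fun t _ => by
    simpa using ((hasDerivAt_neg t).exp).sub_const 1
  have hv : ∀ t ∈ Ioi (0 : ℝ), HasDerivAt (fun t => t ^ s / s) (t ^ (s - 1)) t := fun t ht => by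
    simpa [mul_div_cancel_left₀ _ hs₀.ne] using
      (hasDerivAt_rpow_const (p := s) (Or.inl (ne_of_gt ht))).div_const s
  have h_zero : Tendsto (fun t => (exp (-t) - 1) * (t ^ s / s)) (𝓝[>] 0) (𝓝 0) := by
    have hlim : Tendsto (fun t : ℝ => t ^ (s + 1) / -s) (𝓝[>] 0) (𝓝 0) := by
      simpa using (tendsto_rpow_nhdsGT_zero (p := s + 1) (by linarith)).div_const (-s)
    refine squeeze_zero_norm' ?_ hlim
    filter_upwards [self_mem_nhdsWithin] with t (ht : 0 < t)
    calc ‖(exp (-t) - 1) * (t ^ s / s)‖ = |exp (-t) - 1| * t ^ s / -s := by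
          rw [norm_mul, norm_div, norm_of_nonneg (rpow_nonneg ht.le _), Real.norm_eq_abs s,
            abs_of_neg hs₀, mul_div_assoc, Real.norm_eq_abs]
      _ ≤ t * t ^ s / -s :=
          div_le_div_of_nonneg_right (by gcongr; exact abs_exp_neg_sub_one_le ht.le)
            (by linarith)
      _ = t ^ (s + 1) / -s := by rw [rpow_add ht, rpow_one, mul_comm]
  have h_infty : Tendsto (fun t => (exp (-t) - 1) * (t ^ s / s)) atTop (𝓝 0) := by
    simpa using ((tendsto_exp_neg_atTop_nhds_zero.sub_const 1).mul
      ((tendsto_rpow_neg_atTop (y := -s) (by linarith)).div_const s))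
  have hu'v : IntegrableOn (fun t => -exp (-t) * (t ^ s / s)) (Ioi 0) :=
    IntegrableOn.congr_fun (hΓ.div_const s).neg (fun t _ => by simp only [Pi.neg_apply]; ring)
      measurableSet_Ioi
  have hΓ' : ∫ t in Ioi 0, -exp (-t) * (t ^ s / s) = -(Gamma (s + 1) / s) := by
    rw [Gamma_eq_integral (by linarith), add_sub_cancel_right, ← integral_div, ← integral_neg]
    exact setIntegral_congr_fun measurableSet_Ioi fun t _ => by ring
  rw [integral_Ioi_mul_deriv_eq_deriv_mul hu hv
    (integrableOn_exp_neg_sub_one_mul_rpow ⟨hs₁, hs₀⟩) hu'v h_zero h_infty, hΓ',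
    Gamma_add_one hs₀.ne, mul_div_cancel_left₀ _ hs₀.ne]
  ring

lemma Gamma_neg_of_mem_Ioo {s : ℝ} (hs : s ∈ Ioo (-1) 0) : Gamma s < 0 := by
  have h := Gamma_add_one hs.2.ne
  have := Gamma_pos_of_pos (by linarith [hs.1] : 0 < s + 1)
  nlinarith [hs.2]

lemma image_const_div_Ioi {c : ℝ} (hc : 0 < c) : (fun t => c / t) '' Ioi 0 = Ioi 0 := by
  ext s
  refine ⟨?_, fun hs => ⟨c / s, div_pos hc hs, div_div_cancel₀ hc.ne'⟩⟩
  rintro ⟨t, ht, rfl⟩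
  exact div_pos hc ht

lemma integral_comp_const_div_Ioi {E : Type*} [NormedAddCommGroup E] [NormedSpace ℝ E]
    {c : ℝ} (hc : 0 < c) (g : ℝ → E) :
    ∫ t in Ioi 0, (c / t ^ 2) • g (c / t) = ∫ s in Ioi 0, g s := by
  have hderiv : ∀ t ∈ Ioi (0 : ℝ), HasDerivWithinAt (fun t => c / t) (-c / t ^ 2) (Ioi 0) t :=
    fun t ht => by
      simpa [div_eq_mul_inv] using ((hasDerivAt_inv (ne_of_gt ht)).const_mul c).hasDerivWithinAt
  have hinj : InjOn (fun t => c / t) (Ioi 0) := fun a _ b _ h => by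
    simpa [div_eq_mul_inv, hc.ne'] using h
  have h := integral_image_eq_integral_abs_deriv_smul measurableSet_Ioi hderiv hinj g
  rw [image_const_div_Ioi hc] at h
  rw [h]
  refine setIntegral_congr_fun measurableSet_Ioi fun t (ht : 0 < t) => ?_
  rw [neg_div, abs_neg, abs_of_pos (by positivity)]

lemma tendsto_integral_exp_neg_div_mul {f : ℝ → ℝ} (hf : IntegrableOn f (Ioi 0)) :
    Tendsto (fun c => ∫ t in Ioi 0, exp (-(c / t)) * f t) (𝓝[>] 0)
      (𝓝 (∫ t in Ioi 0, f t)) := by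
  refine tendsto_integral_filter_of_dominated_convergence (fun t => ‖f t‖)
    (Eventually.of_forall fun c => (by fun_prop : Measurable fun t => exp (-(c / t)))
      |>.aestronglyMeasurable.mul hf.aestronglyMeasurable) ?_ hf.norm ?_
  · filter_upwards [self_mem_nhdsWithin] with c (hc : 0 < c)
    filter_upwards [ae_restrict_mem measurableSet_Ioi] with t (ht : 0 < t)
    rw [norm_mul, norm_of_nonneg (exp_pos _).le]
    exact mul_le_of_le_one_left (norm_nonneg _) (exp_le_one_iff.2 (by
      simpa using div_nonneg hc.le ht.le))
  · refine Eventually.of_forall fun t => ?_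
    simpa using ((by fun_prop : Continuous fun c => exp (-(c / t)) * f t).tendsto 0).mono_left
      nhdsWithin_le_nhds

lemma tendsto_const_mul_sq_nhdsGT_zero {a : ℝ} (ha : 0 < a) :
    Tendsto (fun x : ℝ => a * x ^ 2) (𝓝[>] 0) (𝓝[>] 0) := by
  refine tendsto_nhdsWithin_iff.2 ⟨?_, ?_⟩
  · simpa using ((by fun_prop : Continuous fun x : ℝ => a * x ^ 2).tendsto 0).mono_left
      nhdsWithin_le_nhds
  · filter_upwards [self_mem_nhdsWithin] with x (hx : 0 < x)
    exact mul_pos ha (pow_pos hx 2)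

/-- `F_ν(c)`: Euler's integral for `Γ(ν)` damped by `e^{-c/s}` near `s = 0`. -/
noncomputable def perturbedGamma (ν c : ℝ) : ℝ :=
  ∫ s in Ioi 0, exp (-s - c / s) * s ^ (ν - 1)

lemma perturbedGamma_sub_Gamma {ν c : ℝ} (hν : 0 < ν) (hc : 0 < c) :
    perturbedGamma ν c - Gamma ν
      = c ^ ν * ∫ t in Ioi 0, exp (-(c / t)) * ((exp (-t) - 1) * t ^ (-ν - 1)) := by
  rw [perturbedGamma, Gamma_eq_integral hν, ← integral_sub
    (integrableOn_exp_neg_sub_div_mul_rpow hc _) (GammaIntegral_convergent hν),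
    ← integral_comp_const_div_Ioi hc, ← integral_const_mul]
  refine setIntegral_congr_fun measurableSet_Ioi fun t (ht : 0 < t) => ?_
  simp only [smul_eq_mul]
  rw [div_div_cancel₀ hc.ne', rpow_sub_one (by positivity), div_rpow hc.le ht.le,
    rpow_sub_one ht.ne', rpow_neg ht.le, sub_eq_add_neg (-(c / t)), exp_add]
  field_simp

lemma tendsto_rpow_neg_mul_perturbedGamma_sub_Gamma {ν : ℝ} (hν : ν ∈ Ioo 0 1) :
    Tendsto (fun c => c ^ (-ν) * (perturbedGamma ν c - Gamma ν)) (𝓝[>] 0)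
      (𝓝 (Gamma (-ν))) := by
  have hs : -ν ∈ Ioo (-1) 0 := ⟨by linarith [hν.2], by linarith [hν.1]⟩
  rw [Gamma_eq_integral_exp_neg_sub_one_mul_rpow hs]
  refine (tendsto_integral_exp_neg_div_mul (integrableOn_exp_neg_sub_one_mul_rpow hs)).congr' ?_
  filter_upwards [self_mem_nhdsWithin] with c (hc : 0 < c)
  rw [perturbedGamma_sub_Gamma hν.1 hc, ← mul_assoc, ← rpow_add hc, neg_add_cancel, rpow_zero,
    one_mul]

lemma tendsto_perturbedGamma {ν : ℝ} (hν : ν ∈ Ioo 0 1) :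
    Tendsto (perturbedGamma ν) (𝓝[>] 0) (𝓝 (Gamma ν)) := by
  have h := ((tendsto_rpow_nhdsGT_zero hν.1).mul
    (tendsto_rpow_neg_mul_perturbedGamma_sub_Gamma hν)).const_add (Gamma ν)
  rw [zero_mul, add_zero] at h
  refine h.congr' ?_
  filter_upwards [self_mem_nhdsWithin] with c (hc : 0 < c)
  rw [← mul_assoc, ← rpow_add hc, add_neg_cancel, rpow_zero, one_mul, add_sub_cancel]

lemma abs_deriv_smul_perturbedGamma_integrand (ν : ℝ) {z : ℝ} (hz : 0 < z) (t : ℝ) :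
    |z / 2 * exp t| • (exp (-(z / 2 * exp t) - z ^ 2 / 4 / (z / 2 * exp t))
      * (z / 2 * exp t) ^ (ν - 1)) = (z / 2) ^ ν * (exp (-z * cosh t) * exp (ν * t)) := by
  have hz2 : 0 < z / 2 := half_pos hz
  rw [smul_eq_mul, abs_of_pos (by positivity), mul_rpow hz2.le (exp_pos t).le, ← exp_mul,
    rpow_sub_one hz2.ne', cosh_eq, exp_neg]
  rw [show -(z / 2 * exp t) - z ^ 2 / 4 / (z / 2 * exp t) = -z * ((exp t + (exp t)⁻¹) / 2) by
    field_simp; ring]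
  rw [show t * (ν - 1) = ν * t + -t by ring, exp_add, exp_neg]
  field_simp

lemma range_half_mul_exp {z : ℝ} (hz : 0 < z) : range (fun t => z / 2 * exp t) = Ioi 0 := by
  ext s
  refine ⟨?_, fun hs => ⟨log (s / (z / 2)), ?_⟩⟩
  · rintro ⟨t, rfl⟩; exact mul_pos (half_pos hz) (exp_pos t)
  · simp only
    rw [exp_log (div_pos hs (half_pos hz))]
    field_simp

lemma integrable_exp_neg_mul_cosh_mul_exp (ν : ℝ) {z : ℝ} (hz : 0 < z) :
    Integrable (fun t => exp (-z * cosh t) * exp (ν * t)) := by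
  have hderiv : ∀ t ∈ (univ : Set ℝ), HasDerivWithinAt (fun t => z / 2 * exp t)
      (z / 2 * exp t) univ t := fun t _ => ((hasDerivAt_exp t).const_mul _).hasDerivWithinAt
  have hinj : InjOn (fun t => z / 2 * exp t) univ := fun a _ b _ h => by
    simpa [hz.ne'] using h
  have h := (integrableOn_image_iff_integrableOn_abs_deriv_smul MeasurableSet.univ hderiv hinj
    _).mp (image_univ ▸ range_half_mul_exp hz ▸ integrableOn_exp_neg_sub_div_mul_rpow
      (c := z ^ 2 / 4) (by positivity) (ν - 1))
  simp only [abs_deriv_smul_perturbedGamma_integrand ν hz, integrableOn_univ] at h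
  simpa [← mul_assoc, ← rpow_add (half_pos hz)] using h.const_mul ((z / 2) ^ (-ν))

lemma integral_exp_neg_mul_cosh_mul_exp (ν : ℝ) {z : ℝ} (hz : 0 < z) :
    ∫ t, exp (-z * cosh t) * exp (ν * t) = (z / 2) ^ (-ν) * perturbedGamma ν (z ^ 2 / 4) := by
  have hderiv : ∀ t ∈ (univ : Set ℝ), HasDerivWithinAt (fun t => z / 2 * exp t)
      (z / 2 * exp t) univ t := fun t _ => ((hasDerivAt_exp t).const_mul _).hasDerivWithinAt
  have hinj : InjOn (fun t => z / 2 * exp t) univ := fun a _ b _ h => by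
    simpa [hz.ne'] using h
  have h := integral_image_eq_integral_abs_deriv_smul MeasurableSet.univ hderiv hinj
    (fun s => exp (-s - z ^ 2 / 4 / s) * s ^ (ν - 1))
  rw [image_univ, range_half_mul_exp hz] at h
  simp only [abs_deriv_smul_perturbedGamma_integrand ν hz, setIntegral_univ,
    integral_const_mul] at h
  rw [perturbedGamma, h, ← mul_assoc, ← rpow_add (half_pos hz), neg_add_cancel, rpow_zero,
    one_mul]

lemma besselK_eq_half_integral (ν : ℝ) {z : ℝ} (hz : 0 < z) :
    besselK ν z = (1 / 2) * ∫ t, exp (-z * cosh t) * exp (ν * t) := by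
  have hk := integrable_exp_neg_mul_cosh_mul_exp ν hz
  have heven : ∫ t, exp (-z * cosh t) * exp (ν * t)
      = ∫ t, exp (-z * cosh |t|) * cosh (ν * |t|) := by
    rw [← add_halves (∫ t, exp (-z * cosh t) * exp (ν * t))]
    nth_rewrite 1 [← integral_neg_eq_self]
    rw [← add_div, ← integral_add hk.comp_neg hk, ← integral_div]
    congr 1 with t
    rcases abs_choice t with h | h <;> simp only [h, mul_neg, cosh_neg, cosh_eq (ν * t)] <;> ring
  rw [heven, integral_comp_abs (f := fun t => exp (-z * cosh t) * cosh (ν * t)), besselK]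
  ring

lemma besselK_eq_perturbedGamma (ν : ℝ) {z : ℝ} (hz : 0 < z) :
    besselK ν z = 1 / 2 * (z / 2) ^ (-ν) * perturbedGamma ν (z ^ 2 / 4) := by
  rw [besselK_eq_half_integral ν hz, integral_exp_neg_mul_cosh_mul_exp ν hz, mul_assoc]

lemma sqrt_mul_besselK_eq (ν : ℝ) {w x : ℝ} (hw : 0 < w) (hx : 0 < x) :
    √x * besselK ν (x * w)
      = 1 / 2 * (w / 2) ^ (-ν) * x ^ (1 / 2 - ν) * perturbedGamma ν ((w / 2) ^ 2 * x ^ 2) := by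
  rw [besselK_eq_perturbedGamma ν (mul_pos hx hw), mul_div_assoc, mul_rpow hx.le (by positivity),
    sqrt_eq_rpow, sub_eq_add_neg, rpow_add hx]
  ring_nf

lemma tendsto_rpow_mul_sqrt_mul_besselK {ν w : ℝ} (hν : ν ∈ Ioo 0 1) (hw : 0 < w) :
    Tendsto (fun x => x ^ (ν - 1 / 2) * (√x * besselK ν (x * w))) (𝓝[>] 0)
      (𝓝 (1 / 2 * (w / 2) ^ (-ν) * Gamma ν)) := by
  refine (((tendsto_perturbedGamma hν).comp (tendsto_const_mul_sq_nhdsGT_zero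
    (pow_pos (half_pos hw) 2))).const_mul _).congr' ?_
  filter_upwards [self_mem_nhdsWithin] with x (hx : 0 < x)
  rw [sqrt_mul_besselK_eq ν hw hx, Function.comp_apply]
  have : x ^ (ν - 1 / 2) * x ^ (1 / 2 - ν) = 1 := by
    rw [← rpow_add hx, sub_add_sub_cancel', sub_self, rpow_zero]
  linear_combination (1 / 2 * (w / 2) ^ (-ν) * perturbedGamma ν ((w / 2) ^ 2 * x ^ 2)) * this.symm

lemma tendsto_rpow_mul_sqrt_mul_besselK_sub {ν w : ℝ} (hν : ν ∈ Ioo 0 1) (hw : 0 < w) :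
    Tendsto (fun x => x ^ (-(ν + 1 / 2))
        * (√x * besselK ν (x * w) - 1 / 2 * (w / 2) ^ (-ν) * Gamma ν * x ^ (1 / 2 - ν)))
      (𝓝[>] 0) (𝓝 (1 / 2 * (w / 2) ^ (-ν) * (w / 2) ^ (2 * ν) * Gamma (-ν))) := by
  refine (((tendsto_rpow_neg_mul_perturbedGamma_sub_Gamma hν).comp
    (tendsto_const_mul_sq_nhdsGT_zero (pow_pos (half_pos hw) 2))).const_mul _).congr' ?_
  filter_upwards [self_mem_nhdsWithin] with x (hx : 0 < x)
  have hw2 : 0 < w / 2 := half_pos hw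
  have hc : ((w / 2) ^ 2 * x ^ 2) ^ (-ν) = (w / 2) ^ (-(2 * ν)) * x ^ (-(2 * ν)) := by
    rw [mul_rpow (by positivity) (by positivity), ← rpow_natCast_mul hw2.le,
      ← rpow_natCast_mul hx.le]
    push_cast; ring_nf
  have hx' : x ^ (-(ν + 1 / 2)) * x ^ (1 / 2 - ν) = x ^ (-(2 * ν)) := by
    rw [← rpow_add hx]; ring_nf
  have hw' : (w / 2) ^ (2 * ν) * (w / 2) ^ (-(2 * ν)) = 1 := by
    rw [← rpow_add hw2, add_neg_cancel, rpow_zero]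
  rw [sqrt_mul_besselK_eq ν hw hx, Function.comp_apply, hc]
  linear_combination (-1 / 2 * (w / 2) ^ (-ν)) * (perturbedGamma ν ((w / 2) ^ 2 * x ^ 2) - Gamma ν)
    * (hx' - x ^ (-(2 * ν)) * hw')

lemma sqrt_rpow_two_div_div_two_rpow {B p : ℝ} (hB : 0 < B) (hp : 0 < p) :
    (√(B ^ (2 / p)) / 2) ^ p = B / 2 ^ p := by
  rw [div_rpow (sqrt_nonneg _) zero_le_two, sqrt_eq_rpow, ← rpow_mul hB.le, ← rpow_mul hB.le,
    show 2 / p * (1 / 2) * p = 1 by field_simp, rpow_one]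

/-- for `γ < 0` and `E = (2^{1+α} Γ(ν) γ / Γ(−ν))^{2/(1+α)}` with
`ν = (1+α)/2`, the eigenfunction `u(x) = √x K_ν(x√E)` satisfies the boundary
condition `u₁ = γ u₀` characterising the extension `A^{[γ]}_{α,R}(0)`, with
nontrivial boundary value `u₀ ≠ 0`; hence `−E` is its ground-state energy. -/
theorem ground_state_boundary_condition_IR (α γ : ℝ) (hα : α ∈ Set.Ico (0 : ℝ) 1)
    (hγ : γ < 0) :
    let ν : ℝ := (1 + α) / 2
    let E : ℝ := ((2 : ℝ) ^ (1 + α) * Real.Gamma ν * γ / Real.Gamma (-ν)) ^ (2 / (1 + α))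
    let u : ℝ → ℝ := fun x => Real.sqrt x * besselK ν (x * Real.sqrt E)
    0 < E ∧
    ∃ u₀ u₁ : ℝ,
      Tendsto (fun x : ℝ => x ^ (α / 2) * u x) (𝓝[>] 0) (𝓝 u₀) ∧
      Tendsto (fun x : ℝ => x ^ (-(1 + α / 2)) * (u x - u₀ * x ^ (-(α / 2))))
        (𝓝[>] 0) (𝓝 u₁) ∧
      u₀ ≠ 0 ∧ u₁ = γ * u₀ := by
  intro ν E u
  have hν : ν ∈ Ioo 0 1 := by constructor <;> dsimp only [ν] <;> linarith [hα.1, hα.2]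
  have hΓν : 0 < Gamma ν := Gamma_pos_of_pos hν.1
  have hΓneg : Gamma (-ν) < 0 := Gamma_neg_of_mem_Ioo ⟨by linarith [hν.2], by linarith [hν.1]⟩
  have hB : 0 < 2 ^ (1 + α) * Gamma ν * γ / Gamma (-ν) :=
    div_pos_of_neg_of_neg (mul_neg_of_pos_of_neg (by positivity) hγ) hΓneg
  have hE : 0 < E := rpow_pos_of_pos hB _
  have hw : 0 < √E := sqrt_pos.2 hE
  have hα₁ : α / 2 = ν - 1 / 2 := by ring
  have hα₂ : -(1 + α / 2) = -(ν + 1 / 2) := by ring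
  have hα₃ : -(α / 2) = 1 / 2 - ν := by ring
  refine ⟨hE, _, _, hα₁ ▸ tendsto_rpow_mul_sqrt_mul_besselK hν hw,
    hα₂ ▸ hα₃ ▸ tendsto_rpow_mul_sqrt_mul_besselK_sub hν hw, by positivity, ?_⟩
  rw [show 2 * ν = 1 + α by ring, sqrt_rpow_two_div_div_two_rpow hB (by linarith [hα.1])]
  field_simp [hΓneg.ne]
end
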